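/- arXiv:2307.10462 — 9 statements merged into one kernel-verified Lean document; each statement's English description precedes it below -/
import Mathlib

section
/- Let X be a real n×p matrix whose columns are linearly independent, let C be a p×p real diagonal matrix with diagonal entries in {−1, 0, 1}, and set S := C Xᵀ X C. Then there exists a matrix S⁻ satisfying the four Penrose equations for S (S S⁻ S = S, S⁻ S S⁻ = S⁻, (S S⁻)ᵀ = S S⁻, (S⁻ S)ᵀ = S⁻ S) such that S S⁻ = S⁻ S = C². -/
open Matrix

/-- `B` is a Moore–Penrose generalized inverse of `A`:
the four Penrose equations hold. -/
def IsMoorePenrose {p : ℕ} (A B : Matrix (Fin p) (Fin p) ℝ) : Prop :=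
  A * B * A = A ∧ B * A * B = B ∧ (A * B)ᵀ = A * B ∧ (B * A)ᵀ = B * A

theorem exists_moore_penrose_inverse_of_orthant_gram {n p : ℕ}
    (X : Matrix (Fin n) (Fin p) ℝ)
    (hX : LinearIndependent ℝ (fun j : Fin p => fun i : Fin n => X i j))
    (C : Matrix (Fin p) (Fin p) ℝ) (hdiag : C.IsDiag)
    (hent : ∀ i, C i i = -1 ∨ C i i = 0 ∨ C i i = 1) :
    ∃ Sinv : Matrix (Fin p) (Fin p) ℝ,
      IsMoorePenrose (C * Xᵀ * X * C) Sinv ∧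
      (C * Xᵀ * X * C) * Sinv = C * C ∧
      Sinv * (C * Xᵀ * X * C) = C * C := by
  classical
  set c : Fin p → ℝ := C.diag with hcdef
  have hC : C = Matrix.diagonal c := (hdiag.diagonal_diag).symm
  have hcval : ∀ i, c i = -1 ∨ c i = 0 ∨ c i = 1 := hent
  have hc3 : ∀ i, c i * (c i * c i) = c i := by
    intro i; rcases hcval i with h | h | h <;> rw [h] <;> ring
  set G : Matrix (Fin p) (Fin p) ℝ := Xᵀ * X with hGdef
  set S : Matrix (Fin p) (Fin p) ℝ := C * Xᵀ * X * C with hSdef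
  set E : Matrix (Fin p) (Fin p) ℝ := C * C with hEdef
  have hE : E = Matrix.diagonal (fun i => c i * c i) := by
    rw [hEdef, hC, Matrix.diagonal_mul_diagonal]
  have hCsym : Cᵀ = C := by rw [hC, Matrix.diagonal_transpose]
  have hEsym : Eᵀ = E := by rw [hE, Matrix.diagonal_transpose]
  have hCE : C * E = C := by
    rw [hE, hC, Matrix.diagonal_mul_diagonal]
    exact congrArg Matrix.diagonal (funext fun i => hc3 i)
  have hEC : E * C = C := by
    rw [hE, hC, Matrix.diagonal_mul_diagonal]
    exact congrArg Matrix.diagonal (funext fun i => by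
      rcases hcval i with h | h | h <;> rw [h] <;> ring)
  have hEE : E * E = E := by
    rw [hE, Matrix.diagonal_mul_diagonal]
    exact congrArg Matrix.diagonal (funext fun i => by
      rcases hcval i with h | h | h <;> rw [h] <;> ring)
  have hES : E * S = S := by
    calc E * S = (E * C) * (Xᵀ * X * C) := by rw [hSdef]; simp only [Matrix.mul_assoc]
    _ = C * (Xᵀ * X * C) := by rw [hEC]
    _ = S := by rw [hSdef]; simp only [Matrix.mul_assoc]
  have hSE : S * E = S := by
    calc S * E = (C * Xᵀ * X) * (C * E) := by rw [hSdef]; simp only [Matrix.mul_assoc]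
    _ = (C * Xᵀ * X) * C := by rw [hCE]
    _ = S := by rw [hSdef]
  -- injectivity of mulVec from linear independence
  have hXinj : ∀ y : Fin p → ℝ, X *ᵥ y = 0 → y = 0 := by
    intro y hy
    have := (Fintype.linearIndependent_iff.mp hX) y ?_
    · funext i; exact this i
    · funext i
      have := congrFun hy i
      simpa [Matrix.mulVec, dotProduct, mul_comm] using this
  -- the matrix M
  set M : Matrix (Fin p) (Fin p) ℝ := S + (1 - E) with hMdef
  have hME : M * E = S := by
    rw [hMdef, Matrix.add_mul, Matrix.sub_mul, Matrix.one_mul, hSE, hEE]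
    abel
  have hEM : E * M = S := by
    rw [hMdef, Matrix.mul_add, Matrix.mul_sub, Matrix.mul_one, hES, hEE]
    abel
  -- quadratic form of M
  have hquad : ∀ x : Fin p → ℝ,
      x ⬝ᵥ M *ᵥ x =
        (X *ᵥ (C *ᵥ x)) ⬝ᵥ (X *ᵥ (C *ᵥ x)) + ∑ i, (1 - c i * c i) * (x i * x i) := by
    intro x
    have h1 : S *ᵥ x = C *ᵥ (G *ᵥ (C *ᵥ x)) := by
      rw [Matrix.mulVec_mulVec, Matrix.mulVec_mulVec, hSdef, hGdef]
      congr 1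
      simp only [Matrix.mul_assoc]
    have hdotC : ∀ y : Fin p → ℝ, x ⬝ᵥ (C *ᵥ y) = (C *ᵥ x) ⬝ᵥ y := by
      intro y
      rw [Matrix.dotProduct_mulVec, ← hCsym, Matrix.vecMul_transpose, hCsym]
    have h2 : x ⬝ᵥ S *ᵥ x = (X *ᵥ (C *ᵥ x)) ⬝ᵥ (X *ᵥ (C *ᵥ x)) := by
      rw [h1, hdotC, hGdef, ← Matrix.mulVec_mulVec, Matrix.dotProduct_mulVec,
        Matrix.vecMul_transpose]
    have h3 : (1 - E : Matrix (Fin p) (Fin p) ℝ) =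
        Matrix.diagonal (fun i => 1 - c i * c i) := by
      rw [hE, ← Matrix.diagonal_one, Matrix.diagonal_sub]
    have h4 : x ⬝ᵥ (1 - E) *ᵥ x = ∑ i, (1 - c i * c i) * (x i * x i) := by
      rw [h3]
      simp only [dotProduct, Matrix.mulVec_diagonal]
      congr 1; funext i; ring
    rw [hMdef, Matrix.add_mulVec, dotProduct_add, h2, h4]
  -- positive definiteness of M
  have hMherm : M.IsHermitian := by
    have : Mᵀ = M := by
      rw [hMdef, hSdef]
      simp [Matrix.transpose_add, Matrix.transpose_sub, Matrix.transpose_mul,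
        Matrix.transpose_transpose, hCsym, hEsym, Matrix.mul_assoc]
    simpa [Matrix.IsHermitian, Matrix.conjTranspose_eq_transpose_of_trivial] using this
  have hMpd : M.PosDef := by
    rw [Matrix.posDef_iff_dotProduct_mulVec]
    refine ⟨hMherm, fun x hx => ?_⟩
    have hstar : (star x : Fin p → ℝ) = x := by funext i; simp
    rw [hstar, hquad x]
    have hA : (0:ℝ) ≤ (X *ᵥ (C *ᵥ x)) ⬝ᵥ (X *ᵥ (C *ᵥ x)) :=
      Finset.sum_nonneg fun i _ => mul_self_nonneg _
    have hterm : ∀ i, (0:ℝ) ≤ (1 - c i * c i) * (x i * x i) := by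
      intro i
      apply mul_nonneg _ (mul_self_nonneg _)
      rcases hcval i with h | h | h <;> rw [h] <;> norm_num
    have hB : (0:ℝ) ≤ ∑ i, (1 - c i * c i) * (x i * x i) :=
      Finset.sum_nonneg fun i _ => hterm i
    rcases lt_or_eq_of_le (add_nonneg hA hB) with h | h
    · exact h
    · exfalso
      have hA0 : (X *ᵥ (C *ᵥ x)) ⬝ᵥ (X *ᵥ (C *ᵥ x)) = 0 := by linarith
      have hB0 : ∑ i, (1 - c i * c i) * (x i * x i) = 0 := by linarith
      have hCx : C *ᵥ x = 0 := hXinj _ (dotProduct_self_eq_zero.mp hA0)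
      have hBterm : ∀ i ∈ Finset.univ, (1 - c i * c i) * (x i * x i) = 0 :=
        (Finset.sum_eq_zero_iff_of_nonneg fun i _ => hterm i).mp hB0
      apply hx
      funext i
      simp only [Pi.zero_apply]
      have hCxi : c i * x i = 0 := by
        have := congrFun hCx i
        simpa [hC, Matrix.mulVec_diagonal] using this
      rcases hcval i with h | h | h
      · rw [h] at hCxi; linarith
      · have := hBterm i (Finset.mem_univ i)
        rw [h] at this
        simpa using mul_self_eq_zero.mp (by linarith [this] : x i * x i = 0)
      · rw [h, one_mul] at hCxi; exact hCxi
  -- invertibility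
  have hdet : IsUnit M.det := isUnit_iff_ne_zero.mpr (ne_of_gt hMpd.det_pos)
  have h1 : M * M⁻¹ = 1 := Matrix.mul_nonsing_inv M hdet
  have h2 : M⁻¹ * M = 1 := Matrix.nonsing_inv_mul M hdet
  -- the candidate inverse
  refine ⟨E * M⁻¹ * E, ?_, ?_, ?_⟩
  rotate_left
  · -- S * Sinv = E
    calc S * (E * M⁻¹ * E) = (S * E) * M⁻¹ * E := by simp only [Matrix.mul_assoc]
    _ = (E * M) * M⁻¹ * E := by rw [hSE, hEM]
    _ = E * (M * M⁻¹) * E := by simp only [Matrix.mul_assoc]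
    _ = E * E := by rw [h1, Matrix.mul_one]
    _ = E := hEE
  · -- Sinv * S = E
    calc (E * M⁻¹ * E) * S = E * M⁻¹ * (E * S) := by simp only [Matrix.mul_assoc]
    _ = E * M⁻¹ * (M * E) := by rw [hES, hME]
    _ = E * (M⁻¹ * M) * E := by simp only [Matrix.mul_assoc]
    _ = E * E := by rw [h2, Matrix.mul_one]
    _ = E := hEE
  · have hSSi : S * (E * M⁻¹ * E) = E := by
      calc S * (E * M⁻¹ * E) = (S * E) * M⁻¹ * E := by simp only [Matrix.mul_assoc]
      _ = (E * M) * M⁻¹ * E := by rw [hSE, hEM]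
      _ = E * (M * M⁻¹) * E := by simp only [Matrix.mul_assoc]
      _ = E * E := by rw [h1, Matrix.mul_one]
      _ = E := hEE
    have hSiS : (E * M⁻¹ * E) * S = E := by
      calc (E * M⁻¹ * E) * S = E * M⁻¹ * (E * S) := by simp only [Matrix.mul_assoc]
      _ = E * M⁻¹ * (M * E) := by rw [hES, hME]
      _ = E * (M⁻¹ * M) * E := by simp only [Matrix.mul_assoc]
      _ = E * E := by rw [h2, Matrix.mul_one]
      _ = E := hEE
    refine ⟨?_, ?_, ?_, ?_⟩
    · rw [hSSi, hES]
    · calc (E * M⁻¹ * E) * S * (E * M⁻¹ * E) = E * (E * M⁻¹ * E) := by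
            rw [Matrix.mul_assoc, ← Matrix.mul_assoc (E * M⁻¹ * E), hSiS]
      _ = (E * E) * M⁻¹ * E := by simp only [Matrix.mul_assoc]
      _ = E * M⁻¹ * E := by rw [hEE]
    · rw [hSSi, hEsym]
    · rw [hSiS, hEsym]
end

section
/- Let X be a real n×p matrix whose columns are linearly independent, let C be a p×p real diagonal matrix with diagonal entries in {−1, 0, 1}, let λ ≥ 0 and α ∈ (0, 1], and set S(λ) := C Xᵀ X C + λ(1−α) C². Then there exists a matrix S(λ)⁻ satisfying the four Penrose equations for S(λ) such that S(λ) S(λ)⁻ = S(λ)⁻ S(λ) = C². -/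
open Matrix

/-- Abstract algebraic core: if `E` is a symmetric idempotent which acts as a
two-sided identity on `S`, and `S + (1 - E)` is invertible, then `S` has a
Moore–Penrose inverse `Sinv` with `S * Sinv = Sinv * S = E`. -/
lemma aux_moore_penrose {p : ℕ} (S E : Matrix (Fin p) (Fin p) ℝ)
    (hEE : E * E = E) (hES : E * S = S) (hSE : S * E = S) (hEsym : Eᵀ = E)
    (hAdet : IsUnit (S + (1 - E)).det) :
    ∃ Sinv : Matrix (Fin p) (Fin p) ℝ,
      IsMoorePenrose S Sinv ∧ S * Sinv = E ∧ Sinv * S = E := by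
  set A : Matrix (Fin p) (Fin p) ℝ := S + (1 - E) with hAdef
  set B : Matrix (Fin p) (Fin p) ℝ := A⁻¹ with hBdef
  have hAB : A * B = 1 := Matrix.mul_nonsing_inv A hAdet
  have hBA : B * A = 1 := Matrix.nonsing_inv_mul A hAdet
  have hFA : (1 - E) * A = 1 - E := by
    rw [hAdef]
    simp only [mul_add, mul_sub, sub_mul, mul_one, one_mul, hES, hEE]
    abel
  have hAF : A * (1 - E) = 1 - E := by
    rw [hAdef]
    simp only [mul_add, mul_sub, sub_mul, add_mul, mul_one, one_mul, hSE, hEE]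
    abel
  have hFB : (1 - E) * B = 1 - E := by
    calc (1 - E) * B = ((1 - E) * A) * B := by rw [hFA]
    _ = (1 - E) * (A * B) := by rw [mul_assoc]
    _ = 1 - E := by rw [hAB, mul_one]
  have hBF : B * (1 - E) = 1 - E := by
    calc B * (1 - E) = B * (A * (1 - E)) := by rw [hAF]
    _ = (B * A) * (1 - E) := by rw [← mul_assoc]
    _ = 1 - E := by rw [hBA, one_mul]
  have hSF : S * (1 - E) = 0 := by rw [mul_sub, mul_one, hSE, sub_self]
  have hFS : (1 - E) * S = 0 := by rw [sub_mul, one_mul, hES, sub_self]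
  have hSB : S * B = 1 - (1 - E) := by
    have hS : S = A - (1 - E) := by rw [hAdef]; abel
    calc S * B = (A - (1 - E)) * B := by rw [← hS]
    _ = A * B - (1 - E) * B := by rw [sub_mul]
    _ = 1 - (1 - E) := by rw [hAB, hFB]
  have hBS : B * S = 1 - (1 - E) := by
    have hS : S = A - (1 - E) := by rw [hAdef]; abel
    calc B * S = B * (A - (1 - E)) := by rw [← hS]
    _ = B * A - B * (1 - E) := by rw [mul_sub]
    _ = 1 - (1 - E) := by rw [hBA, hBF]
  have hone : (1 : Matrix (Fin p) (Fin p) ℝ) - (1 - E) = E := by abel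
  have hSSinv : S * (B - (1 - E)) = E := by
    rw [mul_sub, hSF, sub_zero, hSB, hone]
  have hSinvS : (B - (1 - E)) * S = E := by
    rw [sub_mul, hFS, sub_zero, hBS, hone]
  have hESinv : E * (B - (1 - E)) = B - (1 - E) := by
    have hEF : E * (1 - E) = 0 := by rw [mul_sub, mul_one, hEE, sub_self]
    have hEB : E * B = B - (1 - E) := by
      calc E * B = (1 - (1 - E)) * B := by rw [hone]
      _ = B - (1 - E) * B := by rw [sub_mul, one_mul]
      _ = B - (1 - E) := by rw [hFB]
    rw [mul_sub, hEF, sub_zero, hEB]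
  exact ⟨B - (1 - E), ⟨by rw [hSSinv, hES], by rw [hSinvS, hESinv],
    by rw [hSSinv, hEsym], by rw [hSinvS, hEsym]⟩, hSSinv, hSinvS⟩

theorem exists_moore_penrose_inverse_of_net_matrix {n p : ℕ}
    (X : Matrix (Fin n) (Fin p) ℝ)
    (hX : LinearIndependent ℝ (fun j : Fin p => fun i : Fin n => X i j))
    (C : Matrix (Fin p) (Fin p) ℝ) (hdiag : C.IsDiag)
    (hent : ∀ i, C i i = -1 ∨ C i i = 0 ∨ C i i = 1)
    (lam α : ℝ) (hlam : 0 ≤ lam) (hα : α ∈ Set.Ioc (0 : ℝ) 1) :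
    ∃ Sinv : Matrix (Fin p) (Fin p) ℝ,
      IsMoorePenrose (C * Xᵀ * X * C + (lam * (1 - α)) • (C * C)) Sinv ∧
      (C * Xᵀ * X * C + (lam * (1 - α)) • (C * C)) * Sinv = C * C ∧
      Sinv * (C * Xᵀ * X * C + (lam * (1 - α)) • (C * C)) = C * C := by
  have hc : 0 ≤ lam * (1 - α) := mul_nonneg hlam (by linarith [hα.2])
  have hXinj : Function.Injective X.mulVec := by
    rw [Matrix.mulVec_injective_iff]; exact hX
  have hCsymm : Cᵀ = C := hdiag.isSymm
  have hC3 : C * C * C = C := by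
    conv_lhs => rw [← hdiag.diagonal_diag]
    rw [diagonal_mul_diagonal, diagonal_mul_diagonal]
    have h : (fun i => C.diag i * C.diag i * C.diag i) = C.diag := by
      funext i
      rcases hent i with h | h | h <;> simp [Matrix.diag, h]
    rw [h, hdiag.diagonal_diag]
  have hCv : ∀ (x : Fin p → ℝ) (i : Fin p), (C *ᵥ x) i = C i i * x i := by
    intro x i
    conv_lhs => rw [← hdiag.diagonal_diag]
    rw [mulVec_diagonal]
    rfl
  have hdotnn : ∀ {m : ℕ} (v : Fin m → ℝ), 0 ≤ v ⬝ᵥ v := by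
    intro m v
    exact Finset.sum_nonneg fun i _ => mul_self_nonneg _
  have hdotpos : ∀ {m : ℕ} (v : Fin m → ℝ), v ≠ 0 → 0 < v ⬝ᵥ v := by
    intro m v hv
    exact lt_of_le_of_ne (hdotnn v)
      (Ne.symm fun h => hv (dotProduct_self_eq_zero.mp h))
  have hSN : C * Xᵀ * X * C + (lam * (1 - α)) • (C * C)
      = C * (Xᵀ * X + (lam * (1 - α)) • 1) * C := by
    simp only [mul_add, add_mul, mul_smul_comm, smul_mul_assoc, mul_one, Matrix.mul_assoc]
  have hEE : (C * C) * (C * C) = C * C := by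
    rw [Matrix.mul_assoc C C (C * C), ← Matrix.mul_assoc C C C, hC3]
  have hES : (C * C) * (C * Xᵀ * X * C + (lam * (1 - α)) • (C * C))
      = C * Xᵀ * X * C + (lam * (1 - α)) • (C * C) := by
    simp only [mul_add, mul_smul_comm, hEE]
    congr 1
    calc C * C * (C * Xᵀ * X * C) = (C * C * C) * (Xᵀ * (X * C)) := by
          simp only [Matrix.mul_assoc]
    _ = C * Xᵀ * X * C := by rw [hC3]; simp only [Matrix.mul_assoc]
  have hSE : (C * Xᵀ * X * C + (lam * (1 - α)) • (C * C)) * (C * C)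
      = C * Xᵀ * X * C + (lam * (1 - α)) • (C * C) := by
    simp only [add_mul, smul_mul_assoc, hEE]
    congr 1
    calc C * Xᵀ * X * C * (C * C) = C * (Xᵀ * (X * (C * C * C))) := by
          simp only [Matrix.mul_assoc]
    _ = C * Xᵀ * X * C := by rw [hC3]; simp only [Matrix.mul_assoc]
  have hEsym : (C * C)ᵀ = C * C := by rw [transpose_mul, hCsymm]
  -- positive definiteness of A := S + (1 - C*C)
  have hApos : (C * (Xᵀ * X + (lam * (1 - α)) • 1) * C + (1 - C * C)).PosDef := by
    rw [posDef_iff_dotProduct_mulVec]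
    constructor
    · show _ᴴ = _
      rw [conjTranspose_eq_transpose_of_trivial, transpose_add, transpose_sub,
        transpose_one, transpose_mul, transpose_mul, hCsymm, transpose_add,
        transpose_smul, transpose_one, transpose_mul, transpose_transpose,
        hEsym, Matrix.mul_assoc]
    · intro x hx
      have hsx : star x = x := by simp
      rw [hsx, add_mulVec, dotProduct_add, sub_mulVec, one_mulVec, dotProduct_sub]
      have hq1 : x ⬝ᵥ (C * (Xᵀ * X + (lam * (1 - α)) • 1) * C) *ᵥ x
          = (C *ᵥ x) ⬝ᵥ (Xᵀ * X + (lam * (1 - α)) • 1) *ᵥ (C *ᵥ x) := by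
        rw [← mulVec_mulVec, ← mulVec_mulVec, dotProduct_mulVec, ← mulVec_transpose,
          hCsymm]
      have hq2 : x ⬝ᵥ (C * C) *ᵥ x = (C *ᵥ x) ⬝ᵥ (C *ᵥ x) := by
        rw [← mulVec_mulVec, dotProduct_mulVec, ← mulVec_transpose, hCsymm]
      have hNform : ∀ y : Fin p → ℝ,
          y ⬝ᵥ (Xᵀ * X + (lam * (1 - α)) • 1) *ᵥ y
          = (X *ᵥ y) ⬝ᵥ (X *ᵥ y) + (lam * (1 - α)) * (y ⬝ᵥ y) := by
        intro y
        rw [add_mulVec, dotProduct_add, smul_mulVec, one_mulVec,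
          dotProduct_smul, ← mulVec_mulVec, dotProduct_mulVec, ← mulVec_transpose,
          transpose_transpose, smul_eq_mul]
      have hterm2 : 0 ≤ x ⬝ᵥ x - (C *ᵥ x) ⬝ᵥ (C *ᵥ x) := by
        simp only [dotProduct]
        rw [← Finset.sum_sub_distrib]
        apply Finset.sum_nonneg
        intro i _
        rw [hCv]
        rcases hent i with h | h | h <;> rw [h] <;> nlinarith [sq_nonneg (x i)]
      rw [hq1, hq2, hNform]
      by_cases hy : C *ᵥ x = 0
      · rw [hy]
        simp only [zero_dotProduct, dotProduct_zero, mulVec_zero, mul_zero,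
          add_zero, sub_zero, zero_add]
        exact hdotpos x hx
      · have h1 : 0 < (X *ᵥ (C *ᵥ x)) ⬝ᵥ (X *ᵥ (C *ᵥ x)) := by
          apply hdotpos
          intro h0
          exact hy (hXinj (by simpa using h0))
        have h2 : 0 ≤ (lam * (1 - α)) * ((C *ᵥ x) ⬝ᵥ (C *ᵥ x)) :=
          mul_nonneg hc (hdotnn _)
        have h3 := hterm2
        rw [hq2] at *
        linarith
  have hAdet : IsUnit (C * (Xᵀ * X + (lam * (1 - α)) • 1) * C + (1 - C * C)).det :=
    hApos.det_pos.ne'.isUnit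
  rw [← hSN] at hAdet
  exact aux_moore_penrose _ _ hEE hES hSE hEsym hAdet
end

section
/- Let X be a real n×p matrix whose columns are linearly independent, Y ∈ ℝⁿ, λ ≥ 0, let C be a p×p real diagonal matrix with diagonal entries in {−1, 0, 1}, set S := C Xᵀ X C, let S⁻ satisfy the four Penrose equations for S with S S⁻ = S⁻ S = C², and put û := S⁻ (C Xᵀ Y − λ C² 𝟙). Then û is a global minimizer of the orthant lasso criterion: L_C(û) ≤ L_C(u) for every u ∈ ℝᵖ, where L_C(u) = ½ Yᵀ Y − uᵀ C Xᵀ Y + ½ uᵀ C Xᵀ X C u + λ uᵀ C² 𝟙. -/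
/-! A stationary point of a convex quadratic is a global minimizer. The Gram matrix
`S = (X C)ᵀ (X C)` is positive semidefinite, and since `C³ = C` the vector
`b = C Xᵀ Y - λ C² 𝟙` lies in the range of `C`, so `S S⁻ b = C² b = b`: the candidate `û = S⁻ b`
solves the normal equations `S û = b` of `L_C`. -/

open Matrix BigOperators

namespace Matrix

variable {ι : Type*} [Fintype ι]

theorem IsDiag.mul_mul_eq_self {α : Type*} [Semiring α] [DecidableEq ι] {C : Matrix ι ι α}
    (hC : C.IsDiag) (hcube : ∀ i, C i i * C i i * C i i = C i i) : C * C * C = C := by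
  rw [← hC.diagonal_diag, diagonal_mul_diagonal, diagonal_mul_diagonal]
  exact congrArg diagonal (funext hcube)

theorem posSemidef_mul_transpose_mul_self_mul {κ : Type*} [Fintype κ] (A : Matrix κ ι ℝ)
    {C : Matrix ι ι ℝ} (hC : Cᵀ = C) : (C * Aᵀ * A * C).PosSemidef := by
  simpa [conjTranspose_eq_transpose_of_trivial, transpose_mul, hC, Matrix.mul_assoc]
    using posSemidef_conjTranspose_mul_self (A * C)

theorem PosSemidef.dotProduct_mulVec_comm {S : Matrix ι ι ℝ} (hS : S.PosSemidef) (v w : ι → ℝ) :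
    v ⬝ᵥ S *ᵥ w = w ⬝ᵥ S *ᵥ v := by
  have hSt : Sᵀ = S := by simpa [conjTranspose_eq_transpose_of_trivial] using hS.1.eq
  rw [dotProduct_mulVec, ← mulVec_transpose, hSt, dotProduct_comm]

theorem PosSemidef.quadratic_le_of_mulVec_eq {S : Matrix ι ι ℝ} (hS : S.PosSemidef)
    {b x : ι → ℝ} (hx : S *ᵥ x = b) (u : ι → ℝ) :
    -(x ⬝ᵥ b) + 1 / 2 * (x ⬝ᵥ S *ᵥ x) ≤ -(u ⬝ᵥ b) + 1 / 2 * (u ⬝ᵥ S *ᵥ u) := by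
  obtain ⟨v, rfl⟩ : ∃ v, u = x + v := ⟨u - x, by abel⟩
  have hv : 0 ≤ v ⬝ᵥ S *ᵥ v := by simpa using hS.dotProduct_mulVec_nonneg v
  have hexpand : (x + v) ⬝ᵥ S *ᵥ (x + v) = x ⬝ᵥ S *ᵥ x + 2 * (v ⬝ᵥ b) + v ⬝ᵥ S *ᵥ v := by
    rw [mulVec_add, add_dotProduct, dotProduct_add, dotProduct_add,
      hS.dotProduct_mulVec_comm x v, hx]
    ring
  rw [hexpand, add_dotProduct]
  linarith

end Matrix

theorem orthant_lasso_global_minimizer_general {n p : ℕ}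
    (X : Matrix (Fin n) (Fin p) ℝ)
    (Y : Fin n → ℝ) (lam : ℝ)
    (C : Matrix (Fin p) (Fin p) ℝ) (hdiag : C.IsDiag)
    (hent : ∀ i, C i i = -1 ∨ C i i = 0 ∨ C i i = 1)
    (Sinv : Matrix (Fin p) (Fin p) ℝ)
    (hleft : (C * Xᵀ * X * C) * Sinv = C * C)
    (LC : (Fin p → ℝ) → ℝ)
    (hLC : ∀ u, LC u = (1 / 2) * (Y ⬝ᵥ Y) - u ⬝ᵥ ((C * Xᵀ).mulVec Y)
        + (1 / 2) * (u ⬝ᵥ (C * Xᵀ * X * C).mulVec u)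
        + lam * (u ⬝ᵥ (C * C).mulVec (fun _ => (1 : ℝ)))) :
    ∀ u : Fin p → ℝ,
      LC (Sinv.mulVec ((C * Xᵀ).mulVec Y - lam • (C * C).mulVec (fun _ => (1 : ℝ))))
        ≤ LC u := by
  intro u
  have hC3 : C * C * C = C := hdiag.mul_mul_eq_self fun i => by
    rcases hent i with h | h | h <;> rw [h] <;> norm_num
  set S := C * Xᵀ * X * C
  set b := (C * Xᵀ) *ᵥ Y - lam • (C * C) *ᵥ fun _ => (1 : ℝ)
  have hb : (C * C) *ᵥ b = b := by
    rw [mulVec_sub, mulVec_smul, mulVec_mulVec, mulVec_mulVec, ← Matrix.mul_assoc,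
      hC3, Matrix.mul_assoc C C, ← Matrix.mul_assoc C C C, hC3]
  have hnormal : S *ᵥ (Sinv *ᵥ b) = b := by rw [mulVec_mulVec, hleft, hb]
  have hLC' : ∀ w, LC w = 1 / 2 * (Y ⬝ᵥ Y) + (-(w ⬝ᵥ b) + 1 / 2 * (w ⬝ᵥ S *ᵥ w)) := by
    intro w
    rw [hLC, dotProduct_sub, dotProduct_smul, smul_eq_mul]
    ring
  rw [hLC', hLC']
  have hS : S.PosSemidef := posSemidef_mul_transpose_mul_self_mul X hdiag.isSymm.eq
  linarith [hS.quadratic_le_of_mulVec_eq hnormal u]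

theorem orthant_lasso_global_minimizer {n p : ℕ}
    (X : Matrix (Fin n) (Fin p) ℝ)
    (hX : LinearIndependent ℝ (fun j : Fin p => fun i : Fin n => X i j))
    (Y : Fin n → ℝ) (lam : ℝ) (hlam : 0 ≤ lam)
    (C : Matrix (Fin p) (Fin p) ℝ) (hdiag : C.IsDiag)
    (hent : ∀ i, C i i = -1 ∨ C i i = 0 ∨ C i i = 1)
    (Sinv : Matrix (Fin p) (Fin p) ℝ)
    (hMP : IsMoorePenrose (C * Xᵀ * X * C) Sinv)
    (hleft : (C * Xᵀ * X * C) * Sinv = C * C)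
    (hright : Sinv * (C * Xᵀ * X * C) = C * C)
    (LC : (Fin p → ℝ) → ℝ)
    (hLC : ∀ u, LC u = (1 / 2) * (Y ⬝ᵥ Y) - u ⬝ᵥ ((C * Xᵀ).mulVec Y)
        + (1 / 2) * (u ⬝ᵥ (C * Xᵀ * X * C).mulVec u)
        + lam * (u ⬝ᵥ (C * C).mulVec (fun _ => (1 : ℝ)))) :
    ∀ u : Fin p → ℝ,
      LC (Sinv.mulVec ((C * Xᵀ).mulVec Y - lam • (C * C).mulVec (fun _ => (1 : ℝ))))
        ≤ LC u :=
  orthant_lasso_global_minimizer_general X Y lam C hdiag hent Sinv hleft LC hLC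
end

section
/- Let X be a real n×p matrix whose columns are linearly independent, Y ∈ ℝⁿ, λ ≥ 0, let C be a p×p real diagonal matrix with diagonal entries in {−1, 0, 1}, set S := C Xᵀ X C, let S⁻ satisfy the four Penrose equations for S with S S⁻ = S⁻ S = C², and put û := S⁻ (C Xᵀ Y − λ C² 𝟙). If every entry of û is nonnegative, then β̂ := C û equals C S⁻ C (Xᵀ Y − λ C 𝟙) and β̂ minimizes the lasso criterion over the closed orthant determined by C: for every u ∈ ℝᵖ with nonnegative entries, L(β̂) ≤ L(C u), where L(β) = ½‖Y − Xβ‖₂² + λ‖β‖₁. -/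
/-! Put `A := X C`. For `u ≥ 0` we have `λ‖C u‖₁ = λ ⟨C² 𝟙, u⟩`, because `|c| = c²` for
`c ∈ {-1, 0, 1}`; so on the orthant `L (C u)` is the least-squares criterion `½‖Y - A u‖²` plus a
linear term. Since `S S⁻ = C²` and `C³ = C`, the vector `û` solves the normal equations
`Aᵀ (Y - A û) = λ C² 𝟙` of this convex quadratic, hence minimizes it over all of `ℝᵖ`. -/

open Matrix BigOperators

section LeastSquares

variable {m k : Type*} [Fintype m] [Fintype k]

theorem sum_sq_sub_mulVec_add_dotProduct_le_of_normal_eq (A : Matrix m k ℝ) (Y : m → ℝ)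
    (e v u : k → ℝ) (hnormal : Aᵀ *ᵥ (Y - A *ᵥ v) = e) :
    (1 / 2) * ∑ i, (Y i - (A *ᵥ v) i) ^ 2 + e ⬝ᵥ v ≤
      (1 / 2) * ∑ i, (Y i - (A *ᵥ u) i) ^ 2 + e ⬝ᵥ u := by
  have sum_sq (w : k → ℝ) : ∑ i, (Y i - (A *ᵥ w) i) ^ 2 = (Y - A *ᵥ w) ⬝ᵥ (Y - A *ᵥ w) := by
    simp only [dotProduct, sq, Pi.sub_apply]
  rw [sum_sq, sum_sq]
  set r := Y - A *ᵥ v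
  set d := A *ᵥ (u - v)
  have hres : Y - A *ᵥ u = r - d := by simp only [r, d, mulVec_sub]; abel
  have hcross : r ⬝ᵥ d = e ⬝ᵥ (u - v) := by
    rw [dotProduct_mulVec, ← hnormal, mulVec_transpose]
  have hd : 0 ≤ d ⬝ᵥ d := by simpa using dotProduct_self_star_nonneg d
  have hexpand : (r - d) ⬝ᵥ (r - d) = r ⬝ᵥ r - 2 * (r ⬝ᵥ d) + d ⬝ᵥ d := by
    simp only [sub_dotProduct, dotProduct_sub, dotProduct_comm d r]; ring
  rw [hres, hexpand, hcross, dotProduct_sub e u v]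
  linarith

theorem transpose_mulVec_sub_mulVec_eq_of_mul_eq (A : Matrix m k ℝ) (G P : Matrix k k ℝ)
    (Y : m → ℝ) (c : k → ℝ) (hG : Aᵀ * A * G = P) (hPA : P * Aᵀ = Aᵀ) (hPc : P *ᵥ c = c) :
    Aᵀ *ᵥ (Y - A *ᵥ (G *ᵥ (Aᵀ *ᵥ Y - c))) = c := by
  have hAG : Aᵀ *ᵥ (A *ᵥ (G *ᵥ (Aᵀ *ᵥ Y - c))) = Aᵀ *ᵥ Y - c := by
    rw [mulVec_mulVec, mulVec_mulVec, hG, mulVec_sub, mulVec_mulVec, hPA, hPc]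
  rw [mulVec_sub, hAG, sub_sub_cancel]

end LeastSquares

section SignMatrix

variable {ι : Type*} [Fintype ι] [DecidableEq ι] {d : ι → ℝ}

theorem mul_self_mul_self_of_sign {c : ℝ} (hc : c = -1 ∨ c = 0 ∨ c = 1) : c * c * c = c := by
  rcases hc with rfl | rfl | rfl <;> norm_num

theorem abs_eq_mul_self_of_sign {c : ℝ} (hc : c = -1 ∨ c = 0 ∨ c = 1) : |c| = c * c := by
  rcases hc with rfl | rfl | rfl <;> norm_num

theorem diagonal_mul_self_mul_self_of_sign (hd : ∀ i, d i = -1 ∨ d i = 0 ∨ d i = 1) :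
    diagonal d * diagonal d * diagonal d = diagonal d := by
  simp only [diagonal_mul_diagonal, mul_self_mul_self_of_sign (hd _)]

theorem sum_abs_diagonal_mulVec_of_sign (hd : ∀ i, d i = -1 ∨ d i = 0 ∨ d i = 1)
    {u : ι → ℝ} (hu : ∀ j, 0 ≤ u j) :
    ∑ j, |(diagonal d *ᵥ u) j| = ((diagonal d * diagonal d) *ᵥ fun _ => 1) ⬝ᵥ u := by
  simp only [diagonal_mul_diagonal, mulVec_diagonal, dotProduct, mul_one, abs_mul,
    abs_eq_mul_self_of_sign (hd _), abs_of_nonneg (hu _)]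

end SignMatrix

theorem orthant_lasso_estimate_minimizes_on_orthant_general {n p : ℕ}
    (X : Matrix (Fin n) (Fin p) ℝ)
    (Y : Fin n → ℝ) (lam : ℝ)
    (C : Matrix (Fin p) (Fin p) ℝ) (hdiag : C.IsDiag)
    (hent : ∀ i, C i i = -1 ∨ C i i = 0 ∨ C i i = 1)
    (Sinv : Matrix (Fin p) (Fin p) ℝ)
    (hleft : (C * Xᵀ * X * C) * Sinv = C * C)
    (uhat : Fin p → ℝ)
    (huhat : uhat = Sinv.mulVec ((C * Xᵀ).mulVec Y - lam • (C * C).mulVec (fun _ => (1 : ℝ))))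
    (hpos : ∀ j, 0 ≤ uhat j)
    (L : (Fin p → ℝ) → ℝ)
    (hL : ∀ β, L β = (1 / 2) * ∑ i, (Y i - X.mulVec β i) ^ 2 + lam * ∑ j, |β j|) :
    C.mulVec uhat
        = (C * Sinv * C).mulVec (Xᵀ.mulVec Y - lam • C.mulVec (fun _ => (1 : ℝ)))
    ∧ ∀ u : Fin p → ℝ, (∀ j, 0 ≤ u j) → L (C.mulVec uhat) ≤ L (C.mulVec u) := by
  obtain ⟨d, rfl⟩ : ∃ d, C = diagonal d := ⟨_, hdiag.diagonal_diag.symm⟩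
  simp only [diagonal_apply_eq] at hent
  refine ⟨by simp only [huhat, mulVec_sub, mulVec_smul, mulVec_mulVec, Matrix.mul_assoc], ?_⟩
  intro u hu
  have hAT : (X * diagonal d)ᵀ = diagonal d * Xᵀ := by rw [transpose_mul, diagonal_transpose]
  have hcube := diagonal_mul_self_mul_self_of_sign hent
  have hL_orthant (v : Fin p → ℝ) (hv : ∀ j, 0 ≤ v j) : L (diagonal d *ᵥ v) =
      (1 / 2) * ∑ i, (Y i - ((X * diagonal d) *ᵥ v) i) ^ 2
        + (lam • (diagonal d * diagonal d) *ᵥ fun _ => 1) ⬝ᵥ v := by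
    rw [hL, sum_abs_diagonal_mulVec_of_sign hent hv, smul_dotProduct, smul_eq_mul, mulVec_mulVec]
  have hnormal : (X * diagonal d)ᵀ *ᵥ (Y - (X * diagonal d) *ᵥ uhat) =
      lam • (diagonal d * diagonal d) *ᵥ fun _ => 1 := by
    rw [huhat, ← hAT]
    refine transpose_mulVec_sub_mulVec_eq_of_mul_eq (X * diagonal d) Sinv (diagonal d * diagonal d)
      Y _ ?_ ?_ ?_
    · rw [hAT, ← hleft]; simp only [Matrix.mul_assoc]
    · rw [hAT, ← Matrix.mul_assoc, hcube]
    · rw [mulVec_smul, mulVec_mulVec, ← Matrix.mul_assoc, hcube]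
  rw [hL_orthant uhat hpos, hL_orthant u hu]
  exact sum_sq_sub_mulVec_add_dotProduct_le_of_normal_eq (X * diagonal d) Y _ uhat u hnormal

theorem orthant_lasso_estimate_minimizes_on_orthant {n p : ℕ}
    (X : Matrix (Fin n) (Fin p) ℝ)
    (hX : LinearIndependent ℝ (fun j : Fin p => fun i : Fin n => X i j))
    (Y : Fin n → ℝ) (lam : ℝ) (hlam : 0 ≤ lam)
    (C : Matrix (Fin p) (Fin p) ℝ) (hdiag : C.IsDiag)
    (hent : ∀ i, C i i = -1 ∨ C i i = 0 ∨ C i i = 1)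
    (Sinv : Matrix (Fin p) (Fin p) ℝ)
    (hMP : IsMoorePenrose (C * Xᵀ * X * C) Sinv)
    (hleft : (C * Xᵀ * X * C) * Sinv = C * C)
    (hright : Sinv * (C * Xᵀ * X * C) = C * C)
    (uhat : Fin p → ℝ)
    (huhat : uhat = Sinv.mulVec ((C * Xᵀ).mulVec Y - lam • (C * C).mulVec (fun _ => (1 : ℝ))))
    (hpos : ∀ j, 0 ≤ uhat j)
    (L : (Fin p → ℝ) → ℝ)
    (hL : ∀ β, L β = (1 / 2) * ∑ i, (Y i - X.mulVec β i) ^ 2 + lam * ∑ j, |β j|) :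
    C.mulVec uhat
        = (C * Sinv * C).mulVec (Xᵀ.mulVec Y - lam • C.mulVec (fun _ => (1 : ℝ)))
    ∧ ∀ u : Fin p → ℝ, (∀ j, 0 ≤ u j) → L (C.mulVec uhat) ≤ L (C.mulVec u) :=
  orthant_lasso_estimate_minimizes_on_orthant_general X Y lam C hdiag hent Sinv hleft uhat huhat
    hpos L hL
end

section
/- Let X be a real n×p matrix whose columns are linearly independent, Y ∈ ℝⁿ, λ ≥ 0, let C be a p×p real diagonal matrix with diagonal entries in {−1, 0, 1}, set S := C Xᵀ X C, let S⁻ satisfy the four Penrose equations for S with S S⁻ = S⁻ S = C², and put û := S⁻ (C Xᵀ Y − λ C² 𝟙). Then the minimal value of the orthant lasso criterion admits the closed form L_C(û) = ½ ( Yᵀ Y − Yᵀ X C S⁻ C Xᵀ Y + 2λ Yᵀ X C S⁻ 𝟙 − λ² 𝟙ᵀ S⁻ 𝟙 ), where L_C(u) = ½ Yᵀ Y − uᵀ C Xᵀ Y + ½ uᵀ C Xᵀ X C u + λ uᵀ C² 𝟙. -/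
open Matrix BigOperators

/-!
Write `A := X C`, so that `C Xᵀ = Aᵀ`, `S = AᵀA` and `P := C² = S S⁻ = S⁻ S`. Then `S⁻` is
symmetric and `S⁻ P = S⁻ S S⁻ = S⁻`, so `û = S⁻ z` with `z := AᵀY - λ𝟙`. Since
`ûᵀ S û = zᵀ S⁻ S S⁻ z = zᵀ S⁻ z`, the criterion at `û` collapses to `½ (YᵀY - zᵀ S⁻ z)`, and
expanding `zᵀ S⁻ z` gives the closed form.
-/

namespace Matrix

variable {k R : Type*} [Fintype k] [CommRing R]

theorem IsSymm.dotProduct_mulVec_comm {G : Matrix k k R} (hG : G.IsSymm) (x y : k → R) :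
    x ⬝ᵥ G *ᵥ y = y ⬝ᵥ G *ᵥ x := by
  simpa only [hG.eq] using dotProduct_transpose_mulVec G x y

theorem IsSymm.dotProduct_mulVec_sub_smul {G : Matrix k k R} (hG : G.IsSymm) (v e : k → R)
    (c : R) :
    (v - c • e) ⬝ᵥ G *ᵥ (v - c • e)
      = v ⬝ᵥ G *ᵥ v - 2 * c * (v ⬝ᵥ G *ᵥ e) + c ^ 2 * (e ⬝ᵥ G *ᵥ e) := by
  simp only [mulVec_sub, mulVec_smul, dotProduct_sub, sub_dotProduct, dotProduct_smul,
    smul_dotProduct, smul_eq_mul, hG.dotProduct_mulVec_comm e v]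
  ring

theorem isSymm_of_mul_mul_eq_self {S G P : Matrix k k R} (hS : S.IsSymm) (hP : P.IsSymm)
    (hGSG : G * S * G = G) (hSG : S * G = P) (hGS : G * S = P) : G.IsSymm := by
  have hPG : P * G = G := by rw [← hGS, hGSG]
  show Gᵀ = G
  calc Gᵀ = (P * G)ᵀ := by rw [hPG]
    _ = Gᵀ * P := by rw [transpose_mul, hP.eq]
    _ = (S * G)ᵀ * G := by rw [← hSG, transpose_mul, hS.eq, mul_assoc]
    _ = G := by rw [hSG, hP.eq, hPG]

end Matrix

section Lasso

variable {m k : Type*} [Fintype m] [Fintype k]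

noncomputable def lassoCriterion (A : Matrix m k ℝ) (P : Matrix k k ℝ) (y : m → ℝ) (lam : ℝ)
    (u : k → ℝ) : ℝ :=
  1 / 2 * (y ⬝ᵥ y) - u ⬝ᵥ Aᵀ *ᵥ y + 1 / 2 * (u ⬝ᵥ (Aᵀ * A) *ᵥ u) + lam * (u ⬝ᵥ P *ᵥ 1)

theorem lassoCriterion_mulVec_eq {A : Matrix m k ℝ} {G P : Matrix k k ℝ} (hG : G.IsSymm)
    (hGSG : G * (Aᵀ * A) * G = G) (hGP : G * P = G) (y : m → ℝ) (lam : ℝ) :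
    lassoCriterion A P y lam (G *ᵥ (Aᵀ *ᵥ y - lam • P *ᵥ 1))
      = 1 / 2 * (y ⬝ᵥ y - y ⬝ᵥ (A * G * Aᵀ) *ᵥ y + 2 * lam * (y ⬝ᵥ (A * G) *ᵥ 1)
          - lam ^ 2 * (1 ⬝ᵥ G *ᵥ 1)) := by
  set v := Aᵀ *ᵥ y
  set z := v - lam • (1 : k → ℝ)
  have hlin (x : k → ℝ) : G *ᵥ z ⬝ᵥ x = z ⬝ᵥ G *ᵥ x := by
    rw [dotProduct_comm, hG.dotProduct_mulVec_comm]
  have hone : G *ᵥ (P *ᵥ 1) = G *ᵥ 1 := by rw [mulVec_mulVec, hGP]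
  have hu : G *ᵥ (v - lam • P *ᵥ 1) = G *ᵥ z := by
    simp only [z, mulVec_sub, mulVec_smul, hone]
  have hquad : G *ᵥ z ⬝ᵥ (Aᵀ * A) *ᵥ (G *ᵥ z) = z ⬝ᵥ G *ᵥ z := by
    rw [hlin, mulVec_mulVec, mulVec_mulVec, hGSG]
  have hvGv : y ⬝ᵥ (A * G * Aᵀ) *ᵥ y = v ⬝ᵥ G *ᵥ v := by
    rw [← mulVec_mulVec, ← mulVec_mulVec, dotProduct_mulVec, ← mulVec_transpose]
  have hvG1 : y ⬝ᵥ (A * G) *ᵥ 1 = v ⬝ᵥ G *ᵥ 1 := by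
    rw [← mulVec_mulVec, dotProduct_mulVec, ← mulVec_transpose]
  calc lassoCriterion A P y lam (G *ᵥ (v - lam • P *ᵥ 1))
      = 1 / 2 * (y ⬝ᵥ y) - z ⬝ᵥ G *ᵥ v + 1 / 2 * (z ⬝ᵥ G *ᵥ z) + lam * (z ⬝ᵥ G *ᵥ 1) := by
        rw [hu, lassoCriterion, hquad, hlin, hlin, hone]
    _ = 1 / 2 * (y ⬝ᵥ y - z ⬝ᵥ G *ᵥ z) := by
        simp only [z, mulVec_sub, mulVec_smul, dotProduct_sub, dotProduct_smul, smul_eq_mul]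
        ring
    _ = _ := by
        rw [hG.dotProduct_mulVec_sub_smul, hvGv, hvG1]
        ring

end Lasso

theorem orthant_lasso_optimal_value_general {n p : ℕ}
    (X : Matrix (Fin n) (Fin p) ℝ)
    (Y : Fin n → ℝ) (lam : ℝ)
    (C : Matrix (Fin p) (Fin p) ℝ) (hdiag : C.IsDiag)
    (Sinv : Matrix (Fin p) (Fin p) ℝ)
    (hMP : IsMoorePenrose (C * Xᵀ * X * C) Sinv)
    (hleft : (C * Xᵀ * X * C) * Sinv = C * C)
    (hright : Sinv * (C * Xᵀ * X * C) = C * C)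
    (uhat : Fin p → ℝ)
    (huhat : uhat = Sinv.mulVec ((C * Xᵀ).mulVec Y - lam • (C * C).mulVec (fun _ => (1 : ℝ))))
    (LC : (Fin p → ℝ) → ℝ)
    (hLC : ∀ u, LC u = (1 / 2) * (Y ⬝ᵥ Y) - u ⬝ᵥ ((C * Xᵀ).mulVec Y)
        + (1 / 2) * (u ⬝ᵥ (C * Xᵀ * X * C).mulVec u)
        + lam * (u ⬝ᵥ (C * C).mulVec (fun _ => (1 : ℝ)))) :
    LC uhat = (1 / 2) * (Y ⬝ᵥ Y
        - Y ⬝ᵥ (X * C * Sinv * C * Xᵀ).mulVec Y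
        + 2 * lam * (Y ⬝ᵥ (X * C * Sinv).mulVec (fun _ => (1 : ℝ)))
        - lam ^ 2 * ((fun _ => (1 : ℝ)) ⬝ᵥ Sinv.mulVec (fun _ => (1 : ℝ)))) := by
  obtain ⟨-, hGSG, -, -⟩ := hMP
  have hC : Cᵀ = C := hdiag.isSymm
  have hA : (X * C)ᵀ = C * Xᵀ := by rw [transpose_mul, hC]
  have hS : C * Xᵀ * X * C = (X * C)ᵀ * (X * C) := by rw [hA, Matrix.mul_assoc (C * Xᵀ)]
  have hG : Sinv.IsSymm := isSymm_of_mul_mul_eq_self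
    (by rw [IsSymm, hS, transpose_mul, transpose_transpose])
    (by rw [IsSymm, transpose_mul, hC]) hGSG hleft hright
  have hGP : Sinv * (C * C) = Sinv := by rw [← hleft, ← mul_assoc, hGSG]
  have hLC' : LC = lassoCriterion (X * C) (C * C) Y lam := by
    funext u
    rw [hLC, lassoCriterion, ← hS, hA]
    rfl
  have hAGA : X * C * Sinv * C * Xᵀ = X * C * Sinv * (X * C)ᵀ := by
    rw [hA, Matrix.mul_assoc (X * C * Sinv)]
  rw [hLC', huhat, ← hA, hAGA]
  exact lassoCriterion_mulVec_eq hG (hS ▸ hGSG) hGP Y lam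

theorem orthant_lasso_optimal_value {n p : ℕ}
    (X : Matrix (Fin n) (Fin p) ℝ)
    (hX : LinearIndependent ℝ (fun j : Fin p => fun i : Fin n => X i j))
    (Y : Fin n → ℝ) (lam : ℝ) (hlam : 0 ≤ lam)
    (C : Matrix (Fin p) (Fin p) ℝ) (hdiag : C.IsDiag)
    (hent : ∀ i, C i i = -1 ∨ C i i = 0 ∨ C i i = 1)
    (Sinv : Matrix (Fin p) (Fin p) ℝ)
    (hMP : IsMoorePenrose (C * Xᵀ * X * C) Sinv)
    (hleft : (C * Xᵀ * X * C) * Sinv = C * C)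
    (hright : Sinv * (C * Xᵀ * X * C) = C * C)
    (uhat : Fin p → ℝ)
    (huhat : uhat = Sinv.mulVec ((C * Xᵀ).mulVec Y - lam • (C * C).mulVec (fun _ => (1 : ℝ))))
    (LC : (Fin p → ℝ) → ℝ)
    (hLC : ∀ u, LC u = (1 / 2) * (Y ⬝ᵥ Y) - u ⬝ᵥ ((C * Xᵀ).mulVec Y)
        + (1 / 2) * (u ⬝ᵥ (C * Xᵀ * X * C).mulVec u)
        + lam * (u ⬝ᵥ (C * C).mulVec (fun _ => (1 : ℝ)))) :
    LC uhat = (1 / 2) * (Y ⬝ᵥ Y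
        - Y ⬝ᵥ (X * C * Sinv * C * Xᵀ).mulVec Y
        + 2 * lam * (Y ⬝ᵥ (X * C * Sinv).mulVec (fun _ => (1 : ℝ)))
        - lam ^ 2 * ((fun _ => (1 : ℝ)) ⬝ᵥ Sinv.mulVec (fun _ => (1 : ℝ)))) :=
  orthant_lasso_optimal_value_general X Y lam C hdiag Sinv hMP hleft hright uhat huhat LC hLC
end

section
/- Let X be a real n×p matrix whose columns are linearly independent, Y ∈ ℝⁿ, λ ≥ 0, α ∈ (0, 1], let C be a p×p real diagonal matrix with diagonal entries in {−1, 0, 1}, set S(λ) := C Xᵀ X C + λ(1−α) C², let S(λ)⁻ satisfy the four Penrose equations for S(λ) with S(λ) S(λ)⁻ = S(λ)⁻ S(λ) = C², and put û := S(λ)⁻ (C Xᵀ Y − αλ C² 𝟙). If every entry of û is nonnegative, then β̂ := C û equals C S(λ)⁻ C (Xᵀ Y − αλ C 𝟙) and β̂ minimizes the elastic net criterion over the closed orthant determined by C: for every u ∈ ℝᵖ with nonnegative entries, E(β̂) ≤ E(C u), where E(β) = ½‖Y − Xβ‖₂² + λα‖β‖₁ + λ(1−α)/2 · ‖β‖₂².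 -/
/-!
On the orthant `{C u : u ≥ 0}` the `ℓ₁` penalty is linear, since `|C_jj u_j| = C_jj² u_j`, so
`E (C u) = ½‖Y‖² + ½ uᵀ S(λ) u - bᵀ u` with `b = C Xᵀ Y - αλ C² 𝟙`. This quadratic is convex,
`S(λ)` being a Gram matrix plus a nonnegative multiple of `C² = Cᵀ C`, and `û` is a critical
point: `S(λ) û = C² b = b` because `C³ = C` and `b ∈ range C`. Hence
`E (C u) - E (C û) = ½ (u - û)ᵀ S(λ) (u - û) ≥ 0`.
-/

open Matrix BigOperators

section Quadratic

variable {ι : Type*} [Fintype ι]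

noncomputable def quadraticObjective (S : Matrix ι ι ℝ) (b u : ι → ℝ) : ℝ :=
  u ⬝ᵥ S *ᵥ u / 2 - b ⬝ᵥ u

variable {S : Matrix ι ι ℝ} {b x : ι → ℝ}

theorem quadraticObjective_add (hS : S.IsSymm) (hx : S *ᵥ x = b) (w : ι → ℝ) :
    quadraticObjective S b (x + w) = quadraticObjective S b x + w ⬝ᵥ S *ᵥ w / 2 := by
  have hxw : x ⬝ᵥ S *ᵥ w = b ⬝ᵥ w := by
    rw [dotProduct_mulVec, ← mulVec_transpose, hS.eq, hx]
  have hwx : w ⬝ᵥ S *ᵥ x = b ⬝ᵥ w := by rw [hx, dotProduct_comm]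
  simp only [quadraticObjective, mulVec_add, add_dotProduct, dotProduct_add, hxw, hwx]
  ring

theorem quadraticObjective_le (hS : S.PosSemidef) (hx : S *ᵥ x = b) (u : ι → ℝ) :
    quadraticObjective S b x ≤ quadraticObjective S b u := by
  have hw : 0 ≤ (u - x) ⬝ᵥ S *ᵥ (u - x) := hS.dotProduct_mulVec_nonneg (u - x)
  have h := quadraticObjective_add (isHermitian_iff_isSymm.mp hS.isHermitian) hx (u - x)
  rw [add_sub_cancel] at h
  linarith

end Quadratic

section Gram

variable {m ι : Type*} [Fintype m] [Fintype ι]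

theorem dotProduct_transpose_mul_mulVec (A : Matrix m ι ℝ) (v w : ι → ℝ) :
    v ⬝ᵥ (Aᵀ * A) *ᵥ w = A *ᵥ v ⬝ᵥ A *ᵥ w := by
  rw [← mulVec_mulVec, dotProduct_mulVec, vecMul_transpose]

theorem sum_sq_mulVec (A : Matrix m ι ℝ) (v : ι → ℝ) :
    ∑ i, (A *ᵥ v) i ^ 2 = v ⬝ᵥ (Aᵀ * A) *ᵥ v := by
  rw [dotProduct_transpose_mul_mulVec]
  simp only [dotProduct, sq]

theorem sum_sq_sub_mulVec (A : Matrix m ι ℝ) (y : m → ℝ) (v : ι → ℝ) :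
    ∑ i, (y i - (A *ᵥ v) i) ^ 2 = y ⬝ᵥ y - 2 * (Aᵀ *ᵥ y) ⬝ᵥ v + v ⬝ᵥ (Aᵀ * A) *ᵥ v := by
  rw [dotProduct_transpose_mul_mulVec, mulVec_transpose, ← dotProduct_mulVec]
  simp only [dotProduct, ← Finset.sum_sub_distrib, Finset.mul_sum, ← Finset.sum_add_distrib]
  exact Finset.sum_congr rfl fun i _ => by ring

theorem posSemidef_mul_transpose_mul_add_smul {C : Matrix ι ι ℝ} (hC : C.IsSymm)
    (X : Matrix m ι ℝ) {c : ℝ} (hc : 0 ≤ c) : (C * Xᵀ * X * C + c • (C * C)).PosSemidef := by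
  have hCt : Cᴴ = C := (conjTranspose_eq_transpose_of_trivial C).trans hC.eq
  have hgram : C * Xᵀ * X * C + c • (C * C) = (X * C)ᴴ * (X * C) + c • (Cᴴ * C) := by
    rw [conjTranspose_mul, hCt, conjTranspose_eq_transpose_of_trivial X]
    simp only [Matrix.mul_assoc]
  rw [hgram]
  exact (posSemidef_conjTranspose_mul_self _).add ((posSemidef_conjTranspose_mul_self C).smul hc)

end Gram

section SignDiagonal

variable {ι : Type*} [Fintype ι] [DecidableEq ι] {C : Matrix ι ι ℝ}

theorem Matrix.IsDiag.mulVec_apply (hC : C.IsDiag) (v : ι → ℝ) (j : ι) :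
    (C *ᵥ v) j = C j j * v j := by
  conv_lhs => rw [← hC.diagonal_diag]
  exact mulVec_diagonal _ _ _

variable (hC : C.IsDiag) (hsign : ∀ i, C i i = -1 ∨ C i i = 0 ∨ C i i = 1)
include hC hsign

theorem mul_mul_self_of_sign_diag : C * (C * C) = C := by
  rw [← hC.diagonal_diag, diagonal_mul_diagonal, diagonal_mul_diagonal]
  congr 1
  funext i
  rcases hsign i with h | h | h <;> simp [h]

theorem sum_abs_mulVec_of_sign_diag {u : ι → ℝ} (hu : ∀ j, 0 ≤ u j) :
    ∑ j, |(C *ᵥ u) j| = (C * C) *ᵥ (fun _ => 1) ⬝ᵥ u := by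
  refine Finset.sum_congr rfl fun j _ => ?_
  rw [← mulVec_mulVec, hC.mulVec_apply, hC.mulVec_apply, hC.mulVec_apply, abs_mul,
    abs_of_nonneg (hu j)]
  rcases hsign j with h | h | h <;> simp [h]

theorem elasticNet_sign_diag_mulVec {m : Type*} [Fintype m] (X : Matrix m ι ℝ) (Y : m → ℝ)
    (lam α : ℝ) {u : ι → ℝ} (hu : ∀ j, 0 ≤ u j) :
    1 / 2 * ∑ i, (Y i - (X *ᵥ (C *ᵥ u)) i) ^ 2 + lam * α * ∑ j, |(C *ᵥ u) j|
        + lam * (1 - α) / 2 * ∑ j, (C *ᵥ u) j ^ 2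
      = Y ⬝ᵥ Y / 2 + quadraticObjective (C * Xᵀ * X * C + (lam * (1 - α)) • (C * C))
          ((C * Xᵀ) *ᵥ Y - (α * lam) • (C * C) *ᵥ (fun _ => 1)) u := by
  have hCt : Cᵀ = C := hC.isSymm.eq
  rw [mulVec_mulVec, sum_sq_sub_mulVec, sum_abs_mulVec_of_sign_diag hC hsign hu, sum_sq_mulVec,
    transpose_mul, hCt]
  simp only [quadraticObjective, add_mulVec, smul_mulVec, dotProduct_add, dotProduct_smul,
    sub_dotProduct, smul_dotProduct, smul_eq_mul, Matrix.mul_assoc]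
  ring

end SignDiagonal

theorem orthant_elastic_net_estimate_minimizes_on_orthant_general {n p : ℕ}
    (X : Matrix (Fin n) (Fin p) ℝ)
    (Y : Fin n → ℝ) (lam α : ℝ) (hlam : 0 ≤ lam) (hα : α ∈ Set.Ioc (0 : ℝ) 1)
    (C : Matrix (Fin p) (Fin p) ℝ) (hdiag : C.IsDiag)
    (hent : ∀ i, C i i = -1 ∨ C i i = 0 ∨ C i i = 1)
    (Slam Sinv : Matrix (Fin p) (Fin p) ℝ)
    (hSlam : Slam = C * Xᵀ * X * C + (lam * (1 - α)) • (C * C))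
    (hleft : Slam * Sinv = C * C)
    (uhat : Fin p → ℝ)
    (huhat : uhat = Sinv.mulVec ((C * Xᵀ).mulVec Y - (α * lam) • (C * C).mulVec (fun _ => (1 : ℝ))))
    (hpos : ∀ j, 0 ≤ uhat j)
    (E : (Fin p → ℝ) → ℝ)
    (hE : ∀ β, E β = (1 / 2) * ∑ i, (Y i - X.mulVec β i) ^ 2
        + lam * α * ∑ j, |β j|
        + lam * (1 - α) / 2 * ∑ j, (β j) ^ 2) :
    C.mulVec uhat
        = (C * Sinv * C).mulVec (Xᵀ.mulVec Y - (α * lam) • C.mulVec (fun _ => (1 : ℝ)))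
    ∧ ∀ u : Fin p → ℝ, (∀ j, 0 ≤ u j) → E (C.mulVec uhat) ≤ E (C.mulVec u) := by
  set b := (C * Xᵀ) *ᵥ Y - (α * lam) • (C * C) *ᵥ (fun _ => (1 : ℝ))
  have hb : b = C *ᵥ (Xᵀ *ᵥ Y - (α * lam) • C *ᵥ (fun _ => 1)) := by
    rw [mulVec_sub, mulVec_smul, mulVec_mulVec, mulVec_mulVec]
  have hSuhat : Slam *ᵥ uhat = b := by
    rw [huhat, mulVec_mulVec, hleft, hb, mulVec_mulVec, Matrix.mul_assoc,
      mul_mul_self_of_sign_diag hdiag hent]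
  have hSlam_psd : Slam.PosSemidef := hSlam ▸
    posSemidef_mul_transpose_mul_add_smul hdiag.isSymm X (mul_nonneg hlam (sub_nonneg.2 hα.2))
  refine ⟨by rw [huhat, hb, mulVec_mulVec, mulVec_mulVec, Matrix.mul_assoc], fun u hu => ?_⟩
  rw [hE, hE, elasticNet_sign_diag_mulVec hdiag hent X Y lam α hpos,
    elasticNet_sign_diag_mulVec hdiag hent X Y lam α hu, ← hSlam]
  exact add_le_add le_rfl (quadraticObjective_le hSlam_psd hSuhat u)

theorem orthant_elastic_net_estimate_minimizes_on_orthant {n p : ℕ}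
    (X : Matrix (Fin n) (Fin p) ℝ)
    (hX : LinearIndependent ℝ (fun j : Fin p => fun i : Fin n => X i j))
    (Y : Fin n → ℝ) (lam α : ℝ) (hlam : 0 ≤ lam) (hα : α ∈ Set.Ioc (0 : ℝ) 1)
    (C : Matrix (Fin p) (Fin p) ℝ) (hdiag : C.IsDiag)
    (hent : ∀ i, C i i = -1 ∨ C i i = 0 ∨ C i i = 1)
    (Slam Sinv : Matrix (Fin p) (Fin p) ℝ)
    (hSlam : Slam = C * Xᵀ * X * C + (lam * (1 - α)) • (C * C))
    (hMP : IsMoorePenrose Slam Sinv)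
    (hleft : Slam * Sinv = C * C)
    (hright : Sinv * Slam = C * C)
    (uhat : Fin p → ℝ)
    (huhat : uhat = Sinv.mulVec ((C * Xᵀ).mulVec Y - (α * lam) • (C * C).mulVec (fun _ => (1 : ℝ))))
    (hpos : ∀ j, 0 ≤ uhat j)
    (E : (Fin p → ℝ) → ℝ)
    (hE : ∀ β, E β = (1 / 2) * ∑ i, (Y i - X.mulVec β i) ^ 2
        + lam * α * ∑ j, |β j|
        + lam * (1 - α) / 2 * ∑ j, (β j) ^ 2) :
    C.mulVec uhat
        = (C * Sinv * C).mulVec (Xᵀ.mulVec Y - (α * lam) • C.mulVec (fun _ => (1 : ℝ)))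
    ∧ ∀ u : Fin p → ℝ, (∀ j, 0 ≤ u j) → E (C.mulVec uhat) ≤ E (C.mulVec u) :=
  orthant_elastic_net_estimate_minimizes_on_orthant_general X Y lam α hlam hα C hdiag hent Slam Sinv
    hSlam hleft uhat huhat hpos E hE
end

section
/- Let X be a real n×p matrix, Y ∈ ℝⁿ, and λ ≥ 0. If λ ≥ max₁≤i≤p |(Xᵀ Y)ᵢ|, then the zero vector minimizes the lasso criterion: L(0) ≤ L(β) for every β ∈ ℝᵖ, where L(β) = ½‖Y − Xβ‖₂² + λ‖β‖₁. -/
/-! `L β - L 0 = ½‖Xβ‖² - ⟪Xᵀ Y, β⟫ + λ‖β‖₁`, and by Hölder's inequality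
`⟪Xᵀ Y, β⟫ ≤ ‖Xᵀ Y‖_∞ ‖β‖₁ ≤ λ ‖β‖₁`. -/

open Matrix BigOperators

lemma dotProduct_le_mul_sum_abs {ι : Type*} [Fintype ι] {u : ι → ℝ} {c : ℝ}
    (hu : ∀ j, |u j| ≤ c) (β : ι → ℝ) : u ⬝ᵥ β ≤ c * ∑ j, |β j| := by
  rw [dotProduct, Finset.mul_sum]
  refine Finset.sum_le_sum fun j _ => ?_
  calc u j * β j ≤ |u j * β j| := le_abs_self _
    _ = |u j| * |β j| := abs_mul _ _
    _ ≤ c * |β j| := mul_le_mul_of_nonneg_right (hu j) (abs_nonneg _)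

lemma sum_sq_sub_two_dotProduct_le_sum_sq_sub {ι : Type*} [Fintype ι] (y v : ι → ℝ) :
    ∑ i, y i ^ 2 - 2 * (y ⬝ᵥ v) ≤ ∑ i, (y i - v i) ^ 2 := by
  rw [dotProduct, Finset.mul_sum, ← Finset.sum_sub_distrib]
  exact Finset.sum_le_sum fun i _ => by nlinarith [sq_nonneg (v i)]

theorem zero_minimizes_lasso_of_large_lambda_general {n p : ℕ}
    (X : Matrix (Fin n) (Fin p) ℝ) (Y : Fin n → ℝ)
    (lam : ℝ)
    (hbig : ∀ i : Fin p, |Xᵀ.mulVec Y i| ≤ lam)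
    (L : (Fin p → ℝ) → ℝ)
    (hL : ∀ β, L β = (1 / 2) * ∑ i, (Y i - X.mulVec β i) ^ 2 + lam * ∑ j, |β j|) :
    ∀ β : Fin p → ℝ, L 0 ≤ L β := by
  intro β
  have hfit := sum_sq_sub_two_dotProduct_le_sum_sq_sub Y (X *ᵥ β)
  rw [dotProduct_mulVec, ← mulVec_transpose] at hfit
  have hpen := dotProduct_le_mul_sum_abs hbig β
  rw [hL, hL]
  simp only [mulVec_zero, Pi.zero_apply, sub_zero, abs_zero, Finset.sum_const_zero, mul_zero,
    add_zero]
  linarith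

theorem zero_minimizes_lasso_of_large_lambda {n p : ℕ}
    (X : Matrix (Fin n) (Fin p) ℝ) (Y : Fin n → ℝ)
    (lam : ℝ) (hlam : 0 ≤ lam)
    (hbig : ∀ i : Fin p, |Xᵀ.mulVec Y i| ≤ lam)
    (L : (Fin p → ℝ) → ℝ)
    (hL : ∀ β, L β = (1 / 2) * ∑ i, (Y i - X.mulVec β i) ^ 2 + lam * ∑ j, |β j|) :
    ∀ β : Fin p → ℝ, L 0 ≤ L β :=
  zero_minimizes_lasso_of_large_lambda_general X Y lam hbig L hL
end

section
/- Let X be a real n×p matrix, Y ∈ ℝⁿ, λ ≥ 0, and α ∈ (0, 1]. If αλ ≥ max₁≤i≤p |(Xᵀ Y)ᵢ|, then the zero vector minimizes the elastic net criterion: E(0) ≤ E(β) for every β ∈ ℝᵖ, where E(β) = ½‖Y − Xβ‖₂² + λα‖β‖₁ + λ(1−α)/2 · ‖β‖₂². -/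
/-!
Expanding the square, `E β - E 0 = ½‖Xβ‖² - ⟨Xᵀ Y, β⟩ + λα‖β‖₁ + λ(1-α)/2 ‖β‖²`. The pairing
`⟨Xᵀ Y, β⟩` is at most `max_i |(Xᵀ Y)_i| · ‖β‖₁ ≤ αλ‖β‖₁` (Hölder for `ℓ^∞`/`ℓ¹`), and the
two quadratic terms are nonnegative.
-/

open Matrix BigOperators

section

variable {ι : Type*} [Fintype ι]

theorem sum_sub_sq_eq (a b : ι → ℝ) :
    ∑ i, (a i - b i) ^ 2 = ∑ i, a i ^ 2 - 2 * a ⬝ᵥ b + ∑ i, b i ^ 2 := by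
  simp only [dotProduct, sub_sq, Finset.sum_add_distrib, Finset.sum_sub_distrib,
    Finset.mul_sum, mul_assoc]

theorem dotProduct_le_mul_sum_abs_s18 {v : ι → ℝ} {c : ℝ} (hv : ∀ i, |v i| ≤ c) (w : ι → ℝ) :
    v ⬝ᵥ w ≤ c * ∑ i, |w i| := by
  rw [Finset.mul_sum]
  refine Finset.sum_le_sum fun i _ => ?_
  calc v i * w i ≤ |v i * w i| := le_abs_self _
    _ = |v i| * |w i| := abs_mul _ _
    _ ≤ c * |w i| := mul_le_mul_of_nonneg_right (hv i) (abs_nonneg _)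

end

theorem sum_sq_le_sum_sq_sub_mulVec {m n : Type*} [Fintype m] [Fintype n]
    (X : Matrix m n ℝ) (Y : m → ℝ) (β : n → ℝ) :
    ∑ i, Y i ^ 2 ≤ ∑ i, (Y i - (X *ᵥ β) i) ^ 2 + 2 * (Xᵀ *ᵥ Y) ⬝ᵥ β := by
  have hpair : Y ⬝ᵥ X *ᵥ β = (Xᵀ *ᵥ Y) ⬝ᵥ β := by
    rw [dotProduct_mulVec, mulVec_transpose]
  have hsq : 0 ≤ ∑ i, (X *ᵥ β) i ^ 2 := Finset.sum_nonneg fun i _ => sq_nonneg _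
  rw [sum_sub_sq_eq, hpair]
  linarith

theorem zero_minimizes_elastic_net_of_large_lambda {n p : ℕ}
    (X : Matrix (Fin n) (Fin p) ℝ) (Y : Fin n → ℝ)
    (lam α : ℝ) (hlam : 0 ≤ lam) (hα : α ∈ Set.Ioc (0 : ℝ) 1)
    (hbig : ∀ i : Fin p, |Xᵀ.mulVec Y i| ≤ α * lam)
    (E : (Fin p → ℝ) → ℝ)
    (hE : ∀ β, E β = (1 / 2) * ∑ i, (Y i - X.mulVec β i) ^ 2
        + lam * α * ∑ j, |β j|
        + lam * (1 - α) / 2 * ∑ j, (β j) ^ 2) :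
    ∀ β : Fin p → ℝ, E 0 ≤ E β := by
  intro β
  have hloss := sum_sq_le_sum_sq_sub_mulVec X Y β
  have hpair := dotProduct_le_mul_sum_abs_s18 hbig β
  have hridge : 0 ≤ lam * (1 - α) / 2 * ∑ j, β j ^ 2 := by
    have : 0 ≤ 1 - α := sub_nonneg.mpr hα.2
    have : 0 ≤ ∑ j, β j ^ 2 := Finset.sum_nonneg fun j _ => sq_nonneg _
    positivity
  rw [hE, hE]
  simp only [mulVec_zero, Pi.zero_apply, sub_zero, abs_zero, Finset.sum_const_zero,
    mul_zero, add_zero, ne_eq, OfNat.ofNat_ne_zero, not_false_eq_true, zero_pow]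
  linarith
end

section
/- Let x ∈ ℝⁿ be a nonzero vector, y ∈ ℝⁿ, λ ≥ 0, and set s := Σᵢ xᵢ yᵢ and β̂ := sign(s)·max(|s| − λ, 0) / (Σᵢ xᵢ²). Then β̂ minimizes the one-parameter lasso criterion: ½ Σᵢ (yᵢ − xᵢ β̂)² + λ|β̂| ≤ ½ Σᵢ (yᵢ − xᵢ β)² + λ|β| for every β ∈ ℝ. In particular, if s > 0 and 0 ≤ λ ≤ s the minimizer is (s − λ)/Σᵢ xᵢ², if s < 0 and 0 ≤ λ ≤ |s| it is (s + λ)/Σᵢ xᵢ², and if λ ≥ |s| the minimizer is 0. -/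
/-!
The criterion equals `½ ∑ yᵢ² + g(β)` with `g(β) = ½ a β² - s β + λ|β|`, `a = ∑ xᵢ² > 0` and
`s = ∑ xᵢ yᵢ`. A point `b` minimizes `g` as soon as `s - a b` is a subgradient of `λ|·|` at `b`,
i.e. `|s - a b| ≤ λ` and `(s - a b) b = λ |b|`, because then
`g(β) - g(b) = ½ a (β - b)² + λ|β| - (s - a b) β ≥ 0`.
For `b = S_λ(s) / a`, with `S_λ` the soft-thresholding map, `s - a b = s - S_λ(s)` is `λ sign s`
when `λ < |s|` and `s` itself otherwise, which satisfies both conditions.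
-/

open BigOperators

noncomputable def softThreshold (s lam : ℝ) : ℝ := Real.sign s * max (|s| - lam) 0

section softThreshold

variable {s lam : ℝ}

theorem softThreshold_of_pos_of_le (hs : 0 < s) (hlam : lam ≤ s) :
    softThreshold s lam = s - lam := by
  rw [softThreshold, Real.sign_of_pos hs, abs_of_pos hs, max_eq_left (by linarith), one_mul]

theorem softThreshold_of_neg_of_le (hs : s < 0) (hlam : lam ≤ |s|) :
    softThreshold s lam = s + lam := by
  rw [abs_of_neg hs] at hlam
  rw [softThreshold, Real.sign_of_neg hs, abs_of_neg hs, max_eq_left (by linarith)]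
  ring

theorem softThreshold_of_abs_le (hs : |s| ≤ lam) : softThreshold s lam = 0 := by
  rw [softThreshold, max_eq_right (by linarith), mul_zero]

theorem abs_sub_softThreshold_le (hlam : 0 ≤ lam) : |s - softThreshold s lam| ≤ lam := by
  rcases le_or_gt |s| lam with hle | hlt
  · rwa [softThreshold_of_abs_le hle, sub_zero]
  rcases lt_trichotomy s 0 with hneg | hzero | hpos
  · rw [softThreshold_of_neg_of_le hneg hlt.le, sub_add_cancel_left, abs_neg, abs_of_nonneg hlam]
  · simp only [hzero, abs_zero] at hlt
    linarith
  · rw [softThreshold_of_pos_of_le hpos (by rw [abs_of_pos hpos] at hlt; exact hlt.le), sub_sub_cancel,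
      abs_of_nonneg hlam]

theorem sub_softThreshold_mul_softThreshold :
    (s - softThreshold s lam) * softThreshold s lam = lam * |softThreshold s lam| := by
  rcases le_or_gt |s| lam with hle | hlt
  · simp [softThreshold_of_abs_le hle]
  rcases lt_trichotomy s 0 with hneg | hzero | hpos
  · rw [abs_of_neg hneg] at hlt
    rw [softThreshold_of_neg_of_le hneg (by rw [abs_of_neg hneg]; exact hlt.le),
      abs_of_neg (by linarith)]
    ring
  · simp [hzero, softThreshold]
  · rw [abs_of_pos hpos] at hlt
    rw [softThreshold_of_pos_of_le hpos hlt.le, abs_of_pos (by linarith)]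
    ring

end softThreshold

theorem quadratic_add_abs_le_of_subgradient {a s lam b : ℝ} (ha : 0 ≤ a)
    (hbound : |s - a * b| ≤ lam) (hslack : (s - a * b) * b = lam * |b|) (β : ℝ) :
    1 / 2 * a * b ^ 2 - s * b + lam * |b| ≤ 1 / 2 * a * β ^ 2 - s * β + lam * |β| := by
  have hcross : (s - a * b) * β ≤ lam * |β| :=
    calc (s - a * b) * β ≤ |s - a * b| * |β| := by rw [← abs_mul]; exact le_abs_self _
      _ ≤ lam * |β| := mul_le_mul_of_nonneg_right hbound (abs_nonneg β)
  nlinarith [mul_nonneg ha (sq_nonneg (β - b))]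

theorem sum_sq_sub_mul_eq {n : ℕ} (x y : Fin n → ℝ) (b : ℝ) :
    ∑ i, (y i - x i * b) ^ 2
      = ∑ i, y i ^ 2 - 2 * b * ∑ i, x i * y i + b ^ 2 * ∑ i, x i ^ 2 := by
  simp only [Finset.mul_sum, ← Finset.sum_sub_distrib, ← Finset.sum_add_distrib]
  exact Finset.sum_congr rfl fun i _ => by ring

theorem one_parameter_lasso_soft_threshold {n : ℕ}
    (x : Fin n → ℝ) (hx : x ≠ 0) (y : Fin n → ℝ)
    (lam : ℝ) (hlam : 0 ≤ lam)
    (s : ℝ) (hs : s = ∑ i, x i * y i)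
    (βhat : ℝ)
    (hβhat : βhat = Real.sign s * max (|s| - lam) 0 / ∑ i, (x i) ^ 2) :
    (∀ β : ℝ,
      (1 / 2) * ∑ i, (y i - x i * βhat) ^ 2 + lam * |βhat|
        ≤ (1 / 2) * ∑ i, (y i - x i * β) ^ 2 + lam * |β|)
    ∧ (0 < s → lam ≤ s → βhat = (s - lam) / ∑ i, (x i) ^ 2)
    ∧ (s < 0 → lam ≤ |s| → βhat = (s + lam) / ∑ i, (x i) ^ 2)
    ∧ (|s| ≤ lam → βhat = 0) := by
  set a := ∑ i, x i ^ 2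
  have ha : 0 < a := by
    obtain ⟨i, hi⟩ := Function.ne_iff.mp hx
    exact Finset.sum_pos' (fun j _ => sq_nonneg (x j))
      ⟨i, Finset.mem_univ i, pow_two_pos_of_ne_zero hi⟩
  change βhat = softThreshold s lam / a at hβhat
  have ha_mul : a * βhat = softThreshold s lam := by rw [hβhat]; field_simp
  refine ⟨fun β => ?_,
    fun hpos hle => by rw [hβhat, softThreshold_of_pos_of_le hpos hle],
    fun hneg hle => by rw [hβhat, softThreshold_of_neg_of_le hneg hle],
    fun hle => by rw [hβhat, softThreshold_of_abs_le hle, zero_div]⟩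
  have hslack : (s - a * βhat) * βhat = lam * |βhat| := by
    rw [ha_mul, hβhat, abs_div, abs_of_pos ha, ← mul_div_assoc, ← mul_div_assoc,
      sub_softThreshold_mul_softThreshold]
  have hmin := quadratic_add_abs_le_of_subgradient ha.le
    (by rw [ha_mul]; exact abs_sub_softThreshold_le hlam) hslack β
  rw [sum_sq_sub_mul_eq, sum_sq_sub_mul_eq, ← hs]
  linarith
end
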